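/- arXiv:2512.21073 — 3 statements merged into one kernel-verified Lean document; each statement's English description precedes it below -/
import Mathlib

section
/- (NilCoxeter relations for odd divided differences, rank computations) Define operators on the free noncommutative algebra OP_n = ℂ⟨x₁,…,xₙ⟩/(xᵢxⱼ + xⱼxᵢ for i ≠ j): the odd divided difference ∂_k determined by ∂_k(x_k) = ∂_k(x_{k+1}) = 1, ∂_k(x_j) = 0 for j ≠ k, k+1, and the twisted Leibniz rule ∂_k(fg) = ∂_k(f)g + s_k^-(f)∂_k(g), where s_k^-(f)(x₁,…,xₙ) = f(−x₁,…,−x_{k+1},−x_k,…,−xₙ) (negate all variables and swap x_k, x_{k+1}). Then ∂_k² = 0 for all 1 ≤ k ≤ n−1. -/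
/-!
The operators `D ∘ s + s ∘ D` and, once that one vanishes, `D ∘ D` are again twisted
derivations: for `D ∘ D` the two cross terms `s (D f) * D g` and `D (s f) * D g` cancel, and
`s ∘ s = id`, so `D ∘ D` is an ordinary derivation. The kernel of a twisted derivation is a
subalgebra, so each of these operators vanishes as soon as it vanishes on the generators `xᵢ`,
where everything is a direct computation: `D xᵢ ∈ {0, 1}` and `D x_{s_k(i)} = D xᵢ`.
-/

/-- Defining relations of the odd polynomial algebra `OP_n`:
`xᵢ xⱼ = − xⱼ xᵢ` for `i ≠ j`. -/
inductive OPRel (n : ℕ) : FreeAlgebra ℂ (Fin n) → FreeAlgebra ℂ (Fin n) → Prop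
  | anticomm (i j : Fin n) (h : i ≠ j) :
      OPRel n (FreeAlgebra.ι ℂ i * FreeAlgebra.ι ℂ j) (-(FreeAlgebra.ι ℂ j * FreeAlgebra.ι ℂ i))

/-- The odd polynomial algebra `OP_n = ℂ⟨x₁,…,xₙ⟩/(xᵢxⱼ + xⱼxᵢ, i ≠ j)`. -/
abbrev OP (n : ℕ) := RingQuot (OPRel n)

/-- The generator `xᵢ` of `OP_n`. -/
noncomputable def OPx (n : ℕ) (i : Fin n) : OP n :=
  RingQuot.mkAlgHom ℂ (OPRel n) (FreeAlgebra.ι ℂ i)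

namespace LinearMap

variable {R A : Type*} [CommSemiring R] [Ring A] [Algebra R A]

theorem map_one_eq_zero_of_twisted_leibniz {σ τ : A →ₐ[R] A} {T : A →ₗ[R] A}
    (hT : ∀ f g, T (f * g) = T f * σ g + τ f * T g) : T 1 = 0 := by
  simpa using hT 1 1

def twistedKer (σ τ : A →ₐ[R] A) (T : A →ₗ[R] A)
    (hT : ∀ f g, T (f * g) = T f * σ g + τ f * T g) : Subalgebra R A where
  carrier := {f | T f = 0}
  mul_mem' {f g} hf hg := by simp_all only [Set.mem_ofPred_eq, zero_mul, mul_zero, add_zero]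
  add_mem' {f g} hf hg := by simp_all only [Set.mem_ofPred_eq, map_add, add_zero]
  algebraMap_mem' r := by
    simp [Algebra.algebraMap_eq_smul_one, map_one_eq_zero_of_twisted_leibniz hT]

theorem eq_zero_of_twisted_leibniz {σ τ : A →ₐ[R] A} {T : A →ₗ[R] A}
    (hT : ∀ f g, T (f * g) = T f * σ g + τ f * T g) {S : Set A}
    (hS : Algebra.adjoin R S = ⊤) (hS0 : ∀ x ∈ S, T x = 0) : T = 0 := by
  have hle : Algebra.adjoin R S ≤ twistedKer σ τ T hT := Algebra.adjoin_le hS0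
  ext f
  exact hle (hS ▸ Algebra.mem_top : f ∈ Algebra.adjoin R S)

variable {s : A →ₐ[R] A} {D : A →ₗ[R] A}

theorem twisted_leibniz_comp_add_comp (hD : ∀ f g, D (f * g) = D f * g + s f * D g)
    (f g : A) :
    (D ∘ₗ s.toLinearMap + s.toLinearMap ∘ₗ D) (f * g) =
      (D ∘ₗ s.toLinearMap + s.toLinearMap ∘ₗ D) f * s g +
        (s.comp s) f * (D ∘ₗ s.toLinearMap + s.toLinearMap ∘ₗ D) g := by
  simp only [add_apply, coe_comp, Function.comp_apply, AlgHom.toLinearMap_apply,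
    AlgHom.comp_apply, map_mul, hD, map_add]
  noncomm_ring

theorem leibniz_comp_self (hD : ∀ f g, D (f * g) = D f * g + s f * D g)
    (hss : s.comp s = AlgHom.id R A) (hDs : D ∘ₗ s.toLinearMap + s.toLinearMap ∘ₗ D = 0)
    (f g : A) :
    (D ∘ₗ D) (f * g) = (D ∘ₗ D) f * AlgHom.id R A g + AlgHom.id R A f * (D ∘ₗ D) g := by
  have hDsf : D (s f) = -s (D f) := eq_neg_of_add_eq_zero_left (congr($hDs f))
  have hssf : s (s f) = f := congr($hss f)
  simp only [coe_comp, Function.comp_apply, AlgHom.id_apply, hD, map_add, hDsf, hssf]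
  noncomm_ring

end LinearMap

theorem OP.adjoin_range_OPx (n : ℕ) : Algebra.adjoin ℂ (Set.range (OPx n)) = ⊤ := by
  have hrange :
      Set.range (OPx n) = RingQuot.mkAlgHom ℂ (OPRel n) '' Set.range (FreeAlgebra.ι ℂ) :=
    Set.range_comp _ _
  rw [hrange, Algebra.adjoin_image, FreeAlgebra.adjoin_range_ι, Algebra.map_top,
    AlgHom.range_eq_top]
  exact RingQuot.mkAlgHom_surjective ℂ (OPRel n)

theorem Fin.apply_swap_eq_and_eq_zero_or_one {M : Type*} [Zero M] [One M] {n k : ℕ}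
    (hk : k + 1 < n) {d : Fin n → M} (hdk : d ⟨k, Nat.lt_of_succ_lt hk⟩ = 1)
    (hdk1 : d ⟨k + 1, hk⟩ = 1) (hd0 : ∀ j : Fin n, (j : ℕ) ≠ k → (j : ℕ) ≠ k + 1 → d j = 0)
    (i : Fin n) :
    d (Equiv.swap ⟨k, Nat.lt_of_succ_lt hk⟩ ⟨k + 1, hk⟩ i) = d i ∧ (d i = 0 ∨ d i = 1) := by
  by_cases h1 : (i : ℕ) = k
  · obtain rfl : i = ⟨k, Nat.lt_of_succ_lt hk⟩ := Fin.ext h1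
    simp [hdk, hdk1]
  by_cases h2 : (i : ℕ) = k + 1
  · obtain rfl : i = ⟨k + 1, hk⟩ := Fin.ext h2
    simp [hdk, hdk1]
  rw [Equiv.swap_apply_of_ne_of_ne (fun h => h1 (by rw [h])) (fun h => h2 (by rw [h]))]
  exact ⟨rfl, Or.inl (hd0 i h1 h2)⟩

/-- odd divided differences square to zero: any linear operator `D` on
`OP_n` satisfying `D xₖ = D x_{k+1} = 1`, `D xⱼ = 0` otherwise, and the twisted Leibniz
rule `D(fg) = D(f)g + s_k⁻(f)D(g)` — where `s_k⁻` is the algebra automorphism sending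
`xⱼ ↦ −x_{s_k(j)}` — satisfies `D² = 0`. -/
theorem odd_divided_difference_sq_zero (n : ℕ) (k : ℕ) (hk : k + 1 < n)
    (s : OP n →ₐ[ℂ] OP n)
    (hs : ∀ j : Fin n,
      s (OPx n j) = -OPx n (Equiv.swap ⟨k, Nat.lt_of_succ_lt hk⟩ ⟨k + 1, hk⟩ j))
    (D : OP n →ₗ[ℂ] OP n)
    (hDk : D (OPx n ⟨k, Nat.lt_of_succ_lt hk⟩) = 1)
    (hDk1 : D (OPx n ⟨k + 1, hk⟩) = 1)
    (hD0 : ∀ j : Fin n, (j : ℕ) ≠ k → (j : ℕ) ≠ k + 1 → D (OPx n j) = 0)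
    (hLeib : ∀ f g : OP n, D (f * g) = D f * g + s f * D g) :
    ∀ f : OP n, D (D f) = 0 := by
  have hgen := Fin.apply_swap_eq_and_eq_zero_or_one hk (d := fun i => D (OPx n i)) hDk hDk1 hD0
  have hD1 : D 1 = 0 :=
    LinearMap.map_one_eq_zero_of_twisted_leibniz (σ := AlgHom.id ℂ _) hLeib
  have hss : s.comp s = AlgHom.id ℂ (OP n) :=
    AlgHom.ext_of_adjoin_eq_top (OP.adjoin_range_OPx n) <| by
      rintro _ ⟨i, rfl⟩
      simp [hs]
  have hDs : D ∘ₗ s.toLinearMap + s.toLinearMap ∘ₗ D = 0 :=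
    LinearMap.eq_zero_of_twisted_leibniz (LinearMap.twisted_leibniz_comp_add_comp hLeib)
      (OP.adjoin_range_OPx n) <| by
      rintro _ ⟨i, rfl⟩
      obtain ⟨hswap, h01 | h01⟩ := hgen i <;> simp [hs, hswap, h01]
  have hDD : D ∘ₗ D = 0 :=
    LinearMap.eq_zero_of_twisted_leibniz (LinearMap.leibniz_comp_self hLeib hss hDs)
      (OP.adjoin_range_OPx n) <| by
      rintro _ ⟨i, rfl⟩
      obtain ⟨-, h01 | h01⟩ := hgen i <;> simp [h01, hD1]
  exact fun f => congr($hDD f)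
end

section
/- (Odd divided difference formula) In the superalgebra P (as above), define the operator σ_k on the polynomial subalgebra ℂ[y₁,…,yₙ] by σ_k(f) = (s_k f − f)/(y_k − y_{k+1}) + c_k c_{k+1} (s̄_k f − f)/(y_k + y_{k+1}), where s_k f swaps y_k, y_{k+1} and s̄_k f(y₁,…,yₙ) = f(y₁,…,y_{k−1}, −y_{k+1}, −y_k, y_{k+2},…,yₙ). Then both numerators are divisible by the respective denominators in ℂ[y₁,…,yₙ], so σ_k is well defined, and σ_k satisfies the Leibniz rule σ_k(fg) = σ_k(f)g + s_k(f)σ_k(g) for all f, g ∈ ℂ[y₁,…,yₙ] (computed inside P). -/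
/-- Generators of the Clifford–polynomial superalgebra `P`: `y`'s, `z`'s and `c`'s. -/
abbrev PGen (n : ℕ) := Fin n ⊕ Fin n ⊕ Fin n

/-- Defining relations of `P`: the `y`'s and `z`'s commute with each other,
`cᵢ² = 1`, `cᵢcⱼ = −cⱼcᵢ` for `i ≠ j`, `cᵢyⱼ = (−1)^{δᵢⱼ} yⱼcᵢ`,
`cᵢzⱼ = (−1)^{δᵢⱼ} zⱼcᵢ`. -/
inductive PRel (n : ℕ) : FreeAlgebra ℂ (PGen n) → FreeAlgebra ℂ (PGen n) → Prop
  | yy (i j : Fin n) : PRel n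
      (FreeAlgebra.ι ℂ (Sum.inl i) * FreeAlgebra.ι ℂ (Sum.inl j))
      (FreeAlgebra.ι ℂ (Sum.inl j) * FreeAlgebra.ι ℂ (Sum.inl i))
  | zz (i j : Fin n) : PRel n
      (FreeAlgebra.ι ℂ (Sum.inr (Sum.inl i)) * FreeAlgebra.ι ℂ (Sum.inr (Sum.inl j)))
      (FreeAlgebra.ι ℂ (Sum.inr (Sum.inl j)) * FreeAlgebra.ι ℂ (Sum.inr (Sum.inl i)))
  | yz (i j : Fin n) : PRel n
      (FreeAlgebra.ι ℂ (Sum.inl i) * FreeAlgebra.ι ℂ (Sum.inr (Sum.inl j)))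
      (FreeAlgebra.ι ℂ (Sum.inr (Sum.inl j)) * FreeAlgebra.ι ℂ (Sum.inl i))
  | csq (i : Fin n) : PRel n
      (FreeAlgebra.ι ℂ (Sum.inr (Sum.inr i)) * FreeAlgebra.ι ℂ (Sum.inr (Sum.inr i))) 1
  | cc (i j : Fin n) (h : i ≠ j) : PRel n
      (FreeAlgebra.ι ℂ (Sum.inr (Sum.inr i)) * FreeAlgebra.ι ℂ (Sum.inr (Sum.inr j)))
      (-(FreeAlgebra.ι ℂ (Sum.inr (Sum.inr j)) * FreeAlgebra.ι ℂ (Sum.inr (Sum.inr i))))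
  | cy_ne (i j : Fin n) (h : i ≠ j) : PRel n
      (FreeAlgebra.ι ℂ (Sum.inr (Sum.inr i)) * FreeAlgebra.ι ℂ (Sum.inl j))
      (FreeAlgebra.ι ℂ (Sum.inl j) * FreeAlgebra.ι ℂ (Sum.inr (Sum.inr i)))
  | cy_eq (i : Fin n) : PRel n
      (FreeAlgebra.ι ℂ (Sum.inr (Sum.inr i)) * FreeAlgebra.ι ℂ (Sum.inl i))
      (-(FreeAlgebra.ι ℂ (Sum.inl i) * FreeAlgebra.ι ℂ (Sum.inr (Sum.inr i))))
  | cz_ne (i j : Fin n) (h : i ≠ j) : PRel n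
      (FreeAlgebra.ι ℂ (Sum.inr (Sum.inr i)) * FreeAlgebra.ι ℂ (Sum.inr (Sum.inl j)))
      (FreeAlgebra.ι ℂ (Sum.inr (Sum.inl j)) * FreeAlgebra.ι ℂ (Sum.inr (Sum.inr i)))
  | cz_eq (i : Fin n) : PRel n
      (FreeAlgebra.ι ℂ (Sum.inr (Sum.inr i)) * FreeAlgebra.ι ℂ (Sum.inr (Sum.inl i)))
      (-(FreeAlgebra.ι ℂ (Sum.inr (Sum.inl i)) * FreeAlgebra.ι ℂ (Sum.inr (Sum.inr i))))

/-- The Clifford–polynomial superalgebra `P`. -/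
abbrev PAlg (n : ℕ) := RingQuot (PRel n)

/-- The even generator `yᵢ`. -/
noncomputable def Py (n : ℕ) (i : Fin n) : PAlg n :=
  RingQuot.mkAlgHom ℂ (PRel n) (FreeAlgebra.ι ℂ (Sum.inl i))

/-- The even generator `zᵢ`. -/
noncomputable def Pz (n : ℕ) (i : Fin n) : PAlg n :=
  RingQuot.mkAlgHom ℂ (PRel n) (FreeAlgebra.ι ℂ (Sum.inr (Sum.inl i)))

/-- The odd generator `cᵢ`. -/
noncomputable def Pc (n : ℕ) (i : Fin n) : PAlg n :=
  RingQuot.mkAlgHom ℂ (PRel n) (FreeAlgebra.ι ℂ (Sum.inr (Sum.inr i)))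

/-- The embedding of `ℂ[y₁,…,yₙ]` into `P`, `yᵢ ↦ yᵢ` (defined on monomials; it is
the canonical algebra map onto the commutative subalgebra generated by the `y`'s). -/
noncomputable def ιP (n : ℕ) : MvPolynomial (Fin n) ℂ → PAlg n := fun f =>
  (AddMonoidAlgebra.coeff f).sum fun m c => c • ((List.finRange n).map fun i => Py n i ^ m i).prod

/-- `s_k`: the transposition of the variables `y_a`, `y_b` on polynomials. -/
noncomputable def skPoly (n : ℕ) (a b : Fin n) :
    MvPolynomial (Fin n) ℂ →ₐ[ℂ] MvPolynomial (Fin n) ℂ :=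
  MvPolynomial.rename (Equiv.swap a b)

/-- `s̄_k`: sends `y_a ↦ −y_b`, `y_b ↦ −y_a`, fixing the other variables. -/
noncomputable def sbarPoly (n : ℕ) (a b : Fin n) :
    MvPolynomial (Fin n) ℂ →ₐ[ℂ] MvPolynomial (Fin n) ℂ :=
  MvPolynomial.aeval fun j =>
    if j = a then -MvPolynomial.X b else if j = b then -MvPolynomial.X a else MvPolynomial.X j

/-- `σ` is an odd divided difference operator in positions `a`, `b`:
`σ f = (s f − f)/(y_a − y_b) + c_a c_b (s̄ f − f)/(y_a + y_b)` computed inside `P`. -/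
def IsOddDD (n : ℕ) (a b : Fin n) (σ : MvPolynomial (Fin n) ℂ →ₗ[ℂ] PAlg n) : Prop :=
  ∀ (f g h : MvPolynomial (Fin n) ℂ),
    skPoly n a b f - f = (MvPolynomial.X a - MvPolynomial.X b) * g →
    sbarPoly n a b f - f = (MvPolynomial.X a + MvPolynomial.X b) * h →
    σ f = ιP n g + Pc n a * Pc n b * ιP n h

section Aux

open MvPolynomial

lemma Py_comm (n : ℕ) (i j : Fin n) : Py n i * Py n j = Py n j * Py n i := by
  simp only [Py, ← map_mul]
  exact RingQuot.mkAlgHom_rel ℂ (PRel.yy i j)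

lemma Pc_Py_ne (n : ℕ) {i j : Fin n} (h : i ≠ j) :
    Pc n i * Py n j = Py n j * Pc n i := by
  simp only [Pc, Py, ← map_mul]
  exact RingQuot.mkAlgHom_rel ℂ (PRel.cy_ne i j h)

lemma Pc_Py_eq (n : ℕ) (i : Fin n) : Pc n i * Py n i = -(Py n i * Pc n i) := by
  simp only [Pc, Py, ← map_mul, ← map_neg]
  exact RingQuot.mkAlgHom_rel ℂ (PRel.cy_eq i)

/-- The commutative subalgebra generated by the `y`'s. -/
noncomputable def PySub (n : ℕ) : Subalgebra ℂ (PAlg n) :=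
  Algebra.adjoin ℂ (Set.range (Py n))

noncomputable instance (n : ℕ) : CommRing (PySub n) :=
  { (inferInstance : Ring (PySub n)) with mul_comm := (Algebra.adjoinCommRingOfComm ℂ (by
    rintro _ ⟨i, rfl⟩ _ ⟨j, rfl⟩; exact Py_comm n i j)).mul_comm }

noncomputable def PyA (n : ℕ) (i : Fin n) : PySub n :=
  ⟨Py n i, Algebra.subset_adjoin (Set.mem_range_self i)⟩

noncomputable def phiP (n : ℕ) : MvPolynomial (Fin n) ℂ →ₐ[ℂ] PySub n :=
  aeval (PyA n)

lemma val_prod_pow (n : ℕ) (m : Fin n →₀ ℕ) :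
    (PySub n).val (∏ i, PyA n i ^ m i) =
      ((List.finRange n).map fun i => Py n i ^ m i).prod := by
  rw [← List.prod_ofFn, map_list_prod ((PySub n).val : PySub n →ₐ[ℂ] PAlg n),
    List.map_ofFn, List.ofFn_eq_map]
  have hfun : (⇑(PySub n).val ∘ fun i => PyA n i ^ m i) = fun i => Py n i ^ m i := by
    funext i
    show (PySub n).val (PyA n i ^ m i) = Py n i ^ m i
    rw [map_pow]
    rfl
  exact congrArg (fun F => (List.map F (List.finRange n)).prod) hfun

lemma iotaP_eq_phiP (n : ℕ) (f : MvPolynomial (Fin n) ℂ) :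
    ιP n f = (PySub n).val (phiP n f) := by
  rw [phiP, aeval_def, eval₂_eq', map_sum, ιP, Finsupp.sum]
  refine Finset.sum_congr rfl fun m _ => ?_
  rw [map_mul, ← val_prod_pow n m, AlgHom.commutes, Algebra.smul_def]
  rfl

lemma iotaP_mul (n : ℕ) (p q : MvPolynomial (Fin n) ℂ) :
    ιP n (p * q) = ιP n p * ιP n q := by
  simp only [iotaP_eq_phiP, map_mul]

lemma iotaP_add (n : ℕ) (p q : MvPolynomial (Fin n) ℂ) :
    ιP n (p + q) = ιP n p + ιP n q := by
  simp only [iotaP_eq_phiP, map_add]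

lemma iotaP_neg (n : ℕ) (p : MvPolynomial (Fin n) ℂ) :
    ιP n (-p) = -ιP n p :=
  calc ιP n (-p) = (PySub n).val (phiP n (-p)) := iotaP_eq_phiP n (-p)
    _ = (PySub n).val (-(phiP n p)) := congrArg _ (map_neg (phiP n) p)
    _ = -((PySub n).val (phiP n p)) := map_neg (PySub n).val (phiP n p)
    _ = -ιP n p := congrArg (fun x : PAlg n => -x) (iotaP_eq_phiP n p).symm

lemma iotaP_X (n : ℕ) (i : Fin n) : ιP n (X i) = Py n i := by
  rw [iotaP_eq_phiP, phiP, aeval_X]; rfl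

lemma iotaP_algebraMap (n : ℕ) (c : ℂ) :
    ιP n (MvPolynomial.C c) = algebraMap ℂ (PAlg n) c := by
  rw [iotaP_eq_phiP, phiP]
  rw [show (MvPolynomial.C c : MvPolynomial (Fin n) ℂ) =
      algebraMap ℂ (MvPolynomial (Fin n) ℂ) c from rfl, AlgHom.commutes, AlgHom.commutes]

lemma sk_sub_dvd (n : ℕ) (a b : Fin n) (f : MvPolynomial (Fin n) ℂ) :
    (X a - X b : MvPolynomial (Fin n) ℂ) ∣ (skPoly n a b f - f) := by
  induction f using MvPolynomial.induction_on with
  | C c => simp [skPoly]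
  | add p q hp hq =>
    have : skPoly n a b (p + q) - (p + q) =
        (skPoly n a b p - p) + (skPoly n a b q - q) := by rw [map_add]; ring
    rw [this]; exact dvd_add hp hq
  | mul_X p i hp =>
    have hXi : (X a - X b : MvPolynomial (Fin n) ℂ) ∣ (skPoly n a b (X i) - X i) := by
      rw [skPoly, rename_X]
      rcases eq_or_ne i a with rfl | hia
      · rw [Equiv.swap_apply_left]
        exact ⟨-1, by ring⟩
      rcases eq_or_ne i b with rfl | hib
      · rw [Equiv.swap_apply_right]
      · rw [Equiv.swap_apply_of_ne_of_ne hia hib, sub_self]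
        exact dvd_zero _
    have : skPoly n a b (p * X i) - p * X i =
        (skPoly n a b p - p) * skPoly n a b (X i) + p * (skPoly n a b (X i) - X i) := by
      rw [map_mul]; ring
    rw [this]
    exact dvd_add (hp.mul_right _) (hXi.mul_left p)

lemma sbar_sub_dvd (n : ℕ) (a b : Fin n) (f : MvPolynomial (Fin n) ℂ) :
    (X a + X b : MvPolynomial (Fin n) ℂ) ∣ (sbarPoly n a b f - f) := by
  induction f using MvPolynomial.induction_on with
  | C c => simp [sbarPoly]
  | add p q hp hq =>
    have : sbarPoly n a b (p + q) - (p + q) =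
        (sbarPoly n a b p - p) + (sbarPoly n a b q - q) := by rw [map_add]; ring
    rw [this]; exact dvd_add hp hq
  | mul_X p i hp =>
    have hXi : (X a + X b : MvPolynomial (Fin n) ℂ) ∣ (sbarPoly n a b (X i) - X i) := by
      rw [sbarPoly, aeval_X]
      rcases eq_or_ne i a with rfl | hia
      · rw [if_pos rfl]
        exact ⟨-1, by ring⟩
      rcases eq_or_ne i b with rfl | hib
      · rw [if_neg hia, if_pos rfl]
        exact ⟨-1, by ring⟩
      · rw [if_neg hia, if_neg hib, sub_self]
        exact dvd_zero _
    have : sbarPoly n a b (p * X i) - p * X i =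
        (sbarPoly n a b p - p) * sbarPoly n a b (X i) + p * (sbarPoly n a b (X i) - X i) := by
      rw [map_mul]; ring
    rw [this]
    exact dvd_add (hp.mul_right _) (hXi.mul_left p)

lemma Pya_CC (n : ℕ) {a b : Fin n} (hab : a ≠ b) :
    Py n a * (Pc n a * Pc n b) = Pc n a * Pc n b * -Py n a := by
  have h1 : Py n a * Pc n a = -(Pc n a * Py n a) := by rw [Pc_Py_eq, neg_neg]
  have h2 : Py n a * Pc n b = Pc n b * Py n a := (Pc_Py_ne n (Ne.symm hab)).symm
  calc Py n a * (Pc n a * Pc n b) = Py n a * Pc n a * Pc n b := (mul_assoc _ _ _).symm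
    _ = -(Pc n a * Py n a) * Pc n b := by rw [h1]
    _ = -(Pc n a * Py n a * Pc n b) := neg_mul (Pc n a * Py n a) (Pc n b)
    _ = -(Pc n a * (Py n a * Pc n b)) := congrArg (fun x : PAlg n => -x)
          (mul_assoc (Pc n a) (Py n a) (Pc n b))
    _ = -(Pc n a * (Pc n b * Py n a)) := by rw [h2]
    _ = -(Pc n a * Pc n b * Py n a) := congrArg (fun x : PAlg n => -x)
          (mul_assoc (Pc n a) (Pc n b) (Py n a)).symm
    _ = Pc n a * Pc n b * -Py n a := (mul_neg (Pc n a * Pc n b) (Py n a)).symm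

lemma Pyb_CC (n : ℕ) {a b : Fin n} (hab : a ≠ b) :
    Py n b * (Pc n a * Pc n b) = Pc n a * Pc n b * -Py n b := by
  have h1 : Py n b * Pc n b = -(Pc n b * Py n b) := by rw [Pc_Py_eq, neg_neg]
  have h2 : Py n b * Pc n a = Pc n a * Py n b := (Pc_Py_ne n hab).symm
  calc Py n b * (Pc n a * Pc n b) = Py n b * Pc n a * Pc n b := (mul_assoc _ _ _).symm
    _ = Pc n a * Py n b * Pc n b := by rw [h2]
    _ = Pc n a * (Py n b * Pc n b) := mul_assoc _ _ _
    _ = Pc n a * -(Pc n b * Py n b) := by rw [h1]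
    _ = -(Pc n a * (Pc n b * Py n b)) := mul_neg (Pc n a) (Pc n b * Py n b)
    _ = -(Pc n a * Pc n b * Py n b) := congrArg (fun x : PAlg n => -x)
          (mul_assoc (Pc n a) (Pc n b) (Py n b)).symm
    _ = Pc n a * Pc n b * -Py n b := (mul_neg (Pc n a * Pc n b) (Py n b)).symm

lemma Pyi_CC (n : ℕ) {a b i : Fin n} (hia : i ≠ a) (hib : i ≠ b) :
    Py n i * (Pc n a * Pc n b) = Pc n a * Pc n b * Py n i := by
  have h2 : Py n i * Pc n a = Pc n a * Py n i := (Pc_Py_ne n hia.symm).symm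
  have h3 : Py n i * Pc n b = Pc n b * Py n i := (Pc_Py_ne n hib.symm).symm
  calc Py n i * (Pc n a * Pc n b) = Py n i * Pc n a * Pc n b := (mul_assoc _ _ _).symm
    _ = Pc n a * Py n i * Pc n b := by rw [h2]
    _ = Pc n a * (Py n i * Pc n b) := mul_assoc _ _ _
    _ = Pc n a * (Pc n b * Py n i) := by rw [h3]
    _ = Pc n a * Pc n b * Py n i := (mul_assoc _ _ _).symm

lemma Py_mul_CC (n : ℕ) {a b : Fin n} (hab : a ≠ b) (i : Fin n) :
    Py n i * (Pc n a * Pc n b) =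
      Pc n a * Pc n b * ιP n (sbarPoly n a b (skPoly n a b (X i))) := by
  have tauX : sbarPoly n a b (skPoly n a b (X i)) =
      if i = a then -X a else if i = b then -X b else X i := by
    rw [skPoly, rename_X, sbarPoly]
    rcases eq_or_ne i a with rfl | hia
    · rw [Equiv.swap_apply_left, aeval_X, if_neg (Ne.symm hab), if_pos rfl, if_pos rfl]
    rcases eq_or_ne i b with rfl | hib
    · rw [Equiv.swap_apply_right, aeval_X, if_pos rfl, if_neg hia, if_pos rfl]
    · rw [Equiv.swap_apply_of_ne_of_ne hia hib, aeval_X, if_neg hia, if_neg hib,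
        if_neg hia, if_neg hib]
  rw [tauX]
  rcases eq_or_ne i a with rfl | hia
  · rw [if_pos rfl, iotaP_neg, iotaP_X]
    exact Pya_CC n hab
  rcases eq_or_ne i b with rfl | hib
  · rw [if_neg hia, if_pos rfl, iotaP_neg, iotaP_X]
    exact Pyb_CC n hab
  · rw [if_neg hia, if_neg hib, iotaP_X]
    exact Pyi_CC n hia hib

lemma iotaP_mul_CC (n : ℕ) {a b : Fin n} (hab : a ≠ b) (p : MvPolynomial (Fin n) ℂ) :
    ιP n p * (Pc n a * Pc n b) =
      Pc n a * Pc n b * ιP n (sbarPoly n a b (skPoly n a b p)) := by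
  induction p using MvPolynomial.induction_on with
  | C c =>
    have hC : sbarPoly n a b (skPoly n a b (MvPolynomial.C c)) = MvPolynomial.C c := by
      rw [show (MvPolynomial.C c : MvPolynomial (Fin n) ℂ) =
          algebraMap ℂ (MvPolynomial (Fin n) ℂ) c from rfl, AlgHom.commutes, AlgHom.commutes]
    rw [hC, iotaP_algebraMap]
    exact Algebra.commutes c _
  | add p q hp hq =>
    rw [iotaP_add, map_add, map_add, iotaP_add, add_mul, mul_add, hp, hq]
  | mul_X p i hp =>
    rw [iotaP_mul, iotaP_X, map_mul, map_mul, iotaP_mul]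
    calc ιP n p * Py n i * (Pc n a * Pc n b)
        = ιP n p * (Py n i * (Pc n a * Pc n b)) := mul_assoc _ _ _
      _ = ιP n p * (Pc n a * Pc n b *
            ιP n (sbarPoly n a b (skPoly n a b (X i)))) := by rw [Py_mul_CC n hab i]
      _ = ιP n p * (Pc n a * Pc n b) *
            ιP n (sbarPoly n a b (skPoly n a b (X i))) := (mul_assoc _ _ _).symm
      _ = Pc n a * Pc n b * ιP n (sbarPoly n a b (skPoly n a b p)) *
            ιP n (sbarPoly n a b (skPoly n a b (X i))) := by rw [hp]
      _ = Pc n a * Pc n b * (ιP n (sbarPoly n a b (skPoly n a b p)) *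
            ιP n (sbarPoly n a b (skPoly n a b (X i)))) := mul_assoc _ _ _

lemma sk_sk (n : ℕ) (a b : Fin n) (f : MvPolynomial (Fin n) ℂ) :
    skPoly n a b (skPoly n a b f) = f := by
  rw [skPoly, rename_rename]
  have : (Equiv.swap a b : Fin n → Fin n) ∘ (Equiv.swap a b) = id := by
    funext i; simp [Equiv.swap_apply_self]
  rw [this, rename_id, AlgHom.id_apply]

end Aux

/-- Odd divided difference formula: both numerators `s_k f − f` and
`s̄_k f − f` are divisible by `y_k − y_{k+1}` resp. `y_k + y_{k+1}` in `ℂ[y₁,…,yₙ]`,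
so `σ_k` is well defined, and any such `σ_k` satisfies the twisted Leibniz rule
`σ_k(fg) = σ_k(f)g + s_k(f)σ_k(g)` inside `P`. -/
theorem odd_divided_difference_well_defined_and_leibniz
    (n : ℕ) (k : ℕ) (hk : k + 1 < n) :
    let a : Fin n := ⟨k, Nat.lt_of_succ_lt hk⟩
    let b : Fin n := ⟨k + 1, hk⟩
    (∀ f : MvPolynomial (Fin n) ℂ,
        ∃ g, skPoly n a b f - f = (MvPolynomial.X a - MvPolynomial.X b) * g) ∧
      (∀ f : MvPolynomial (Fin n) ℂ,
        ∃ h, sbarPoly n a b f - f = (MvPolynomial.X a + MvPolynomial.X b) * h) ∧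
      ∀ σ : MvPolynomial (Fin n) ℂ →ₗ[ℂ] PAlg n, IsOddDD n a b σ →
        ∀ f g : MvPolynomial (Fin n) ℂ,
          σ (f * g) = σ f * ιP n g + ιP n (skPoly n a b f) * σ g := by
  intro a b
  have hab : a ≠ b := by
    intro h
    have : k = k + 1 := congrArg Fin.val h
    omega
  refine ⟨fun f => (sk_sub_dvd n a b f), fun f => (sbar_sub_dvd n a b f), ?_⟩
  intro σ hσ f g
  obtain ⟨gf, hgf⟩ := sk_sub_dvd n a b f
  obtain ⟨hf, hhf⟩ := sbar_sub_dvd n a b f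
  obtain ⟨gg, hgg⟩ := sk_sub_dvd n a b g
  obtain ⟨hg, hhg⟩ := sbar_sub_dvd n a b g
  have h1 : σ f = ιP n gf + Pc n a * Pc n b * ιP n hf := hσ f gf hf hgf hhf
  have h2 : σ g = ιP n gg + Pc n a * Pc n b * ιP n hg := hσ g gg hg hgg hhg
  have e1 : skPoly n a b (f * g) - f * g =
      (MvPolynomial.X a - MvPolynomial.X b) * (gf * g + skPoly n a b f * gg) := by
    rw [map_mul]
    linear_combination g * hgf + skPoly n a b f * hgg
  have e2 : sbarPoly n a b (f * g) - f * g =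
      (MvPolynomial.X a + MvPolynomial.X b) * (hf * g + sbarPoly n a b f * hg) := by
    rw [map_mul]
    linear_combination g * hhf + sbarPoly n a b f * hhg
  have h3 : σ (f * g) = ιP n (gf * g + skPoly n a b f * gg) +
      Pc n a * Pc n b * ιP n (hf * g + sbarPoly n a b f * hg) :=
    hσ (f * g) _ _ e1 e2
  have hkey : ιP n (skPoly n a b f) * (Pc n a * Pc n b) =
      Pc n a * Pc n b * ιP n (sbarPoly n a b f) := by
    have := iotaP_mul_CC n hab (skPoly n a b f)
    rwa [sk_sk] at this
  rw [h3, h1, h2, iotaP_add, iotaP_mul, iotaP_mul, iotaP_add, iotaP_mul, iotaP_mul]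
  have hre : ιP n (skPoly n a b f) * (Pc n a * Pc n b * ιP n hg) = Pc n a * Pc n b * (ιP n (sbarPoly n a b f) * ιP n hg) := by
    rw [← mul_assoc, hkey, mul_assoc]
  calc ιP n gf * ιP n g + ιP n (skPoly n a b f) * ιP n gg + Pc n a * Pc n b * (ιP n hf * ιP n g + ιP n (sbarPoly n a b f) * ιP n hg)
      = ιP n gf * ιP n g + ιP n (skPoly n a b f) * ιP n gg + ((Pc n a * Pc n b) * (ιP n hf * ιP n g) + (Pc n a * Pc n b) * (ιP n (sbarPoly n a b f) * ιP n hg)) :=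
        congrArg (fun t : PAlg n => ιP n gf * ιP n g + ιP n (skPoly n a b f) * ιP n gg + t)
          (mul_add (Pc n a * Pc n b) (ιP n hf * ιP n g) (ιP n (sbarPoly n a b f) * ιP n hg))
    _ = ιP n gf * ιP n g + ιP n (skPoly n a b f) * ιP n gg + ((Pc n a * Pc n b) * ιP n hf * ιP n g + (Pc n a * Pc n b) * (ιP n (sbarPoly n a b f) * ιP n hg)) :=
        congrArg (fun t : PAlg n => ιP n gf * ιP n g + ιP n (skPoly n a b f) * ιP n gg + (t + (Pc n a * Pc n b) * (ιP n (sbarPoly n a b f) * ιP n hg)))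
          (mul_assoc (Pc n a * Pc n b) (ιP n hf) (ιP n g)).symm
    _ = (ιP n gf * ιP n g + (Pc n a * Pc n b) * ιP n hf * ιP n g) + (ιP n (skPoly n a b f) * ιP n gg + (Pc n a * Pc n b) * (ιP n (sbarPoly n a b f) * ιP n hg)) :=
        add_add_add_comm (ιP n gf * ιP n g) (ιP n (skPoly n a b f) * ιP n gg) ((Pc n a * Pc n b) * ιP n hf * ιP n g) ((Pc n a * Pc n b) * (ιP n (sbarPoly n a b f) * ιP n hg))
    _ = (ιP n gf * ιP n g + (Pc n a * Pc n b) * ιP n hf * ιP n g) + (ιP n (skPoly n a b f) * ιP n gg + ιP n (skPoly n a b f) * ((Pc n a * Pc n b) * ιP n hg)) :=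
        congrArg (fun t : PAlg n => (ιP n gf * ιP n g + (Pc n a * Pc n b) * ιP n hf * ιP n g) + (ιP n (skPoly n a b f) * ιP n gg + t)) hre.symm
    _ = (ιP n gf + (Pc n a * Pc n b) * ιP n hf) * ιP n g + (ιP n (skPoly n a b f) * ιP n gg + ιP n (skPoly n a b f) * ((Pc n a * Pc n b) * ιP n hg)) :=
        congrArg (fun t : PAlg n => t + (ιP n (skPoly n a b f) * ιP n gg + ιP n (skPoly n a b f) * ((Pc n a * Pc n b) * ιP n hg)))
          (add_mul (ιP n gf) ((Pc n a * Pc n b) * ιP n hf) (ιP n g)).symm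
    _ = (ιP n gf + (Pc n a * Pc n b) * ιP n hf) * ιP n g + ιP n (skPoly n a b f) * (ιP n gg + (Pc n a * Pc n b) * ιP n hg) :=
        congrArg (fun t : PAlg n => (ιP n gf + (Pc n a * Pc n b) * ιP n hf) * ιP n g + t)
          (mul_add (ιP n (skPoly n a b f)) (ιP n gg) ((Pc n a * Pc n b) * ιP n hg)).symm
end

section
/- (Nondegenerate pairing from a 'creation/annihilation' adjunction, base case of Kashiwara's argument) Let V = ⊕_{ν ∈ ℕ[I]} V_ν be an ℕ[I]-graded vector space over a field F with V₀ = F·1, equipped with operators fᵢ: V_ν → V_{ν+i} and eᵢ': V_ν → V_{ν−i}, and a symmetric bilinear form ⟨,⟩ with ⟨1,1⟩ = 1 and ⟨fᵢx, y⟩ = κᵢ⟨x, eᵢ'y⟩ for nonzero scalars κᵢ. Suppose that every x ∈ V_ν with ν ≠ 0 and eᵢ'(x) = 0 for all i is zero, and V_ν is spanned by images of the fᵢ for ν ≠ 0. Then ⟨,⟩ is nondegenerate on each V_ν. -/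
/-- Nondegenerate pairing from a creation/annihilation adjunction:
an `ℕ[I]`-graded space `V` with `V₀ = F·1`, raising operators `fᵢ`, lowering operators
`eᵢ'`, a symmetric bilinear form with `⟨1,1⟩ = 1` and `⟨fᵢ x, y⟩ = κᵢ ⟨x, eᵢ' y⟩`,
such that `eᵢ'`-primitive vectors in nonzero degrees vanish and nonzero-degree pieces
are spanned by images of the `fᵢ`, has a nondegenerate form on each `V_ν`. -/
theorem pairing_nondegenerate_of_adjunction
    (F : Type*) [Field F] (I : Type*) [DecidableEq I]
    (V : Type*) [AddCommGroup V] [Module F V]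
    (Vsub : (I →₀ ℕ) → Submodule F V)
    (hdirect : DirectSum.IsInternal Vsub)
    (hfin : ∀ ν, Module.Finite F (Vsub ν))
    (one : V) (hone : one ∈ Vsub 0) (hV0 : Vsub 0 = Submodule.span F {one})
    (B : V →ₗ[F] V →ₗ[F] F) (hsymm : ∀ x y, B x y = B y x) (hB1 : B one one = 1)
    (f e : I → V →ₗ[F] V)
    (hf : ∀ (i : I) (ν : I →₀ ℕ),
      Submodule.map (f i) (Vsub ν) ≤ Vsub (ν + Finsupp.single i 1))
    (he : ∀ (i : I) (μ : I →₀ ℕ),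
      Submodule.map (e i) (Vsub (μ + Finsupp.single i 1)) ≤ Vsub μ)
    (he0 : ∀ (i : I) (ν : I →₀ ℕ), ν i = 0 → ∀ x ∈ Vsub ν, e i x = 0)
    (κ : I → F) (hκ : ∀ i, κ i ≠ 0)
    (hadj : ∀ (i : I) (x y : V), B (f i x) y = κ i * B x (e i y))
    (hvanish : ∀ (ν : I →₀ ℕ), ν ≠ 0 → ∀ x ∈ Vsub ν, (∀ i, e i x = 0) → x = 0)
    (hspan : ∀ (ν : I →₀ ℕ), ν ≠ 0 →
      Vsub ν ≤ ⨆ (i : I) (μ : I →₀ ℕ) (_ : μ + Finsupp.single i 1 = ν),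
        Submodule.map (f i) (Vsub μ)) :
    ∀ (ν : I →₀ ℕ), ∀ x ∈ Vsub ν, (∀ y ∈ Vsub ν, B x y = 0) → x = 0 := by
  suffices H : ∀ n (ν : I →₀ ℕ), (ν.sum fun _ m => m) = n →
      ∀ x ∈ Vsub ν, (∀ y ∈ Vsub ν, B x y = 0) → x = 0 from fun ν => H _ ν rfl
  intro n
  induction n using Nat.strong_induction_on with
  | _ n ih =>
    intro ν hν x hx horth
    by_cases h0 : ν = 0
    · subst h0
      rw [hV0] at hx
      obtain ⟨c, rfl⟩ := Submodule.mem_span_singleton.mp hx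
      have h1 := horth one hone
      rw [map_smul, LinearMap.smul_apply, hB1, smul_eq_mul, mul_one] at h1
      simp [h1]
    · refine hvanish ν h0 x hx fun i => ?_
      by_cases hi : ν i = 0
      · exact he0 i ν hi x hx
      · set μ := ν - Finsupp.single i 1 with hμ
        have hsum : μ + Finsupp.single i 1 = ν := by
          ext j
          rcases eq_or_ne i j with rfl | hj
          · simp only [hμ, Finsupp.add_apply, Finsupp.tsub_apply, Finsupp.single_eq_same]
            omega
          · simp [hμ, Finsupp.single_eq_of_ne' hj]
        have hex : e i x ∈ Vsub μ :=
          he i μ (Submodule.mem_map_of_mem (hsum ▸ hx))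
        have hlt : (μ.sum fun _ m => m) < n := by
          have : (ν.sum fun _ m => m) = (μ.sum fun _ m => m) + 1 := by
            rw [← hsum, Finsupp.sum_add_index' (fun _ => rfl) (fun _ _ _ => rfl),
              Finsupp.sum_single_index rfl]
          omega
        refine ih _ hlt μ rfl (e i x) hex fun z hz => ?_
        have h2 : B x (f i z) = 0 :=
          horth (f i z) (hsum ▸ hf i μ (Submodule.mem_map_of_mem hz))
        have h3 : B (f i z) x = κ i * B z (e i x) := hadj i z x
        rw [hsymm x (f i z), h3] at h2
        rw [hsymm]
        exact (mul_eq_zero.mp h2).resolve_left (hκ i)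
end
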